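/- Let i, j ≥ 1 with i + j ≤ n, let 1 ≤ k ≤ i−1 and 1 ≤ k' ≤ j−1. Then the following three maps are well-defined surjective homomorphisms of ℂ[S_{n−1}]-modules: φ_0 : R^{n−1}_{i,j} → R^n_{i,j}/⟨x_n, y_n⟩ sending the class of P to the class of P; φ_k : R^{n−1}_{i−1,j} → ⟨x_n^k, y_n⟩/⟨x_n^{k+1}, y_n⟩ (ideals in R^n_{i,j}) sending the class of P to the class of x_n^k P; and φ'_{k'} : R^{n−1}_{i,j−1} → ⟨y_n^{k'}⟩/⟨y_n^{k'+1}⟩ (ideals in R^n_{i,j}) sending the class of P to the class of y_n^{k'} P. Here P ranges over polynomials in x_1,…,x_{n−1},y_1,…,y_{n−1}, and S_{n−1} ≤ S_n permutes the first n−1 indices. -/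

import Mathlib

open MvPolynomial

set_option maxHeartbeats 1000000
set_option synthInstance.maxHeartbeats 400000

noncomputable section

/-- the ideal `(x₁y₁, …, xₙyₙ)`. -/
abbrev Bideal (n : ℕ) : Ideal (MvPolynomial (Fin n ⊕ Fin n) ℂ) :=
  Ideal.span (Set.range fun i : Fin n => X (Sum.inl i) * X (Sum.inr i))

/-- `B n = ℂ[x₁,…,xₙ,y₁,…,yₙ]/(x₁y₁,…,xₙyₙ)`, the `n`-th tensor power of `ℂ[x,y]/(xy)`.
The variable `x_i` is `X (Sum.inl i)` and `y_i` is `X (Sum.inr i)`. -/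
abbrev B (n : ℕ) : Type := MvPolynomial (Fin n ⊕ Fin n) ℂ ⧸ Bideal n

abbrev mkB (n : ℕ) : MvPolynomial (Fin n ⊕ Fin n) ℂ →ₐ[ℂ] B n :=
  Ideal.Quotient.mkₐ ℂ (Bideal n)

def xv (n : ℕ) (i : Fin n) : B n := mkB n (X (Sum.inl i))
def yv (n : ℕ) (i : Fin n) : B n := mkB n (X (Sum.inr i))

/-- the action of a permutation `σ ∈ Sₙ` on `B n`: `σ·xᵢ = x_{σ i}`, `σ·yᵢ = y_{σ i}`. -/
def permB (n : ℕ) (σ : Equiv.Perm (Fin n)) : B n →ₐ[ℂ] B n :=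
  Ideal.Quotient.liftₐ (Bideal n)
    ((mkB n).comp (MvPolynomial.rename (Sum.map ⇑σ ⇑σ)))
    (by
      intro a ha
      have h : Bideal n ≤ RingHom.ker ((mkB n).comp (MvPolynomial.rename (Sum.map ⇑σ ⇑σ))).toRingHom := by
        rw [Ideal.span_le]
        rintro _ ⟨i, rfl⟩
        simp only [SetLike.mem_coe, RingHom.mem_ker, AlgHom.toRingHom_eq_coe, RingHom.coe_coe,
          AlgHom.comp_apply, map_mul, rename_X, Sum.map_inl, Sum.map_inr]
        rw [← map_mul, Ideal.Quotient.mkₐ_eq_mk, Ideal.Quotient.eq_zero_iff_mem]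
        exact Ideal.subset_span ⟨σ i, rfl⟩
      exact h ha)

/-- evaluation at the origin. -/
def ev0 (n : ℕ) : B n →ₐ[ℂ] ℂ :=
  Ideal.Quotient.liftₐ (Bideal n) (aeval fun _ => (0 : ℂ))
    (by
      intro a ha
      have h : Bideal n ≤ RingHom.ker (aeval (R := ℂ) fun _ : Fin n ⊕ Fin n => (0 : ℂ)).toRingHom := by
        rw [Ideal.span_le]
        rintro _ ⟨i, rfl⟩
        simp [RingHom.mem_ker]
      exact h ha)

/-- `Jₙ`, the ideal of `B n` generated by the `Sₙ`-invariant elements vanishing at the origin. -/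
def Jn (n : ℕ) : Ideal (B n) :=
  Ideal.span {p : B n | (∀ σ : Equiv.Perm (Fin n), permB n σ p = p) ∧ ev0 n p = 0}

/-- the symmetric coinvariant algebra `Rₙ = Bₙ/Jₙ`. -/
abbrev Rn (n : ℕ) : Type := B n ⧸ Jn n

/-- the `k`-th elementary symmetric polynomial `e_k` in the `x` variables. -/
def eX (n k : ℕ) : B n :=
  ∑ S ∈ Finset.powersetCard k (Finset.univ : Finset (Fin n)), ∏ t ∈ S, xv n t

/-- the `k`-th elementary symmetric polynomial `f_k` in the `y` variables. -/
def fY (n k : ℕ) : B n :=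
  ∑ S ∈ Finset.powersetCard k (Finset.univ : Finset (Fin n)), ∏ t ∈ S, yv n t

/-- the generating set `S^n_{i,j}` of the ideal `I^n_{i,j}`:
`e₁,…,e_{i−1}`, all `x_I` with `|I| = i`, `f₁,…,f_{j−1}`, all `y_J` with `|J| = j`. -/
def Sij (n i j : ℕ) : Set (B n) :=
  {p | ∃ k, 1 ≤ k ∧ k < i ∧ p = eX n k} ∪
  {p | ∃ I : Finset (Fin n), I.card = i ∧ p = ∏ t ∈ I, xv n t} ∪
  {p | ∃ k, 1 ≤ k ∧ k < j ∧ p = fY n k} ∪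
  {p | ∃ J : Finset (Fin n), J.card = j ∧ p = ∏ t ∈ J, yv n t}

/-- the ideal `I^n_{i,j}`; `R^n_{i,j} = B n ⧸ Iij n i j`. -/
def Iij (n i j : ℕ) : Ideal (B n) := Ideal.span (Sij n i j)

/-- the subquotient `K / K'` of two ideals of `B n`, as a `ℂ`-module. -/
abbrev SQ (n : ℕ) (K K' : Ideal (B n)) : Type :=
  ↥(K.restrictScalars ℂ) ⧸
    (Submodule.comap (K.restrictScalars ℂ).subtype (K'.restrictScalars ℂ))

/-- the class in `K / K'` of an element `p ∈ K`. -/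
def sqMk (n : ℕ) (K K' : Ideal (B n)) (p : B n) (hp : p ∈ K) : SQ n K K' :=
  Submodule.Quotient.mk ⟨p, hp⟩

/-- the inclusion `B m → B n` sending `x_t ↦ x_t`, `y_t ↦ y_t`. -/
def inclB (m n : ℕ) (h : m ≤ n) : B m →ₐ[ℂ] B n :=
  Ideal.Quotient.liftₐ (Bideal m)
    ((mkB n).comp (MvPolynomial.rename (Sum.map (Fin.castLE h) (Fin.castLE h))))
    (by
      intro a ha
      have hker : Bideal m ≤ RingHom.ker
          ((mkB n).comp (MvPolynomial.rename (Sum.map (Fin.castLE h) (Fin.castLE h)))).toRingHom := by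
        rw [Ideal.span_le]
        rintro _ ⟨i, rfl⟩
        simp only [SetLike.mem_coe, RingHom.mem_ker, AlgHom.toRingHom_eq_coe, RingHom.coe_coe,
          AlgHom.comp_apply, map_mul, rename_X, Sum.map_inl, Sum.map_inr]
        rw [← map_mul, Ideal.Quotient.mkₐ_eq_mk, Ideal.Quotient.eq_zero_iff_mem]
        exact Ideal.subset_span ⟨Fin.castLE h i, rfl⟩
      exact hker ha)

/-- extension of a permutation of `Fin m` to a permutation of `Fin n`
(acting as the identity on the extra letters). -/
def extPerm (m n : ℕ) (h : m ≤ n) (σ : Equiv.Perm (Fin m)) : Equiv.Perm (Fin n) :=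
  σ.viaFintypeEmbedding ⟨Fin.castLE h, Fin.castLE_injective h⟩

/-- the ideal of `B (m+1)` corresponding to the ideal `⟨xₙ^k, yₙ⟩` of `R^n_{i,j}`
(with `n = m+1`). -/
def LkIdeal (m i j k : ℕ) : Ideal (B (m + 1)) :=
  Iij (m + 1) i j ⊔
    Ideal.span {xv (m + 1) (Fin.last m) ^ k, yv (m + 1) (Fin.last m)}

/-- the ideal of `B (m+1)` corresponding to the ideal `⟨xₙ, yₙ⟩` of `R^n_{i,j}`. -/
def L0Ideal (m i j : ℕ) : Ideal (B (m + 1)) :=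
  Iij (m + 1) i j ⊔
    Ideal.span {xv (m + 1) (Fin.last m), yv (m + 1) (Fin.last m)}

/-- the ideal of `B (m+1)` corresponding to the ideal `⟨yₙ^{k'}⟩` of `R^n_{i,j}`. -/
def MyIdeal (m i j k' : ℕ) : Ideal (B (m + 1)) :=
  Iij (m + 1) i j ⊔ Ideal.span {yv (m + 1) (Fin.last m) ^ k'}

/-!
Write `ι : B_{n-1} → B_n` for the inclusion and `ρ : B_n → B_{n-1}` for the substitution
`x_n = y_n = 0`. Then `Q ≡ ι (ρ Q)` modulo `(x_n, y_n)`, and `ρ` sends the elementary symmetric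
polynomials `e_l, f_l` in `n` variables to those in `n - 1` variables. Hence `ι` maps every
generator of `I^{n-1}_{i,j}` into `I^n_{i,j} + (x_n, y_n)`, which makes `φ₀` well defined and
surjective. For `φ_k` (and symmetrically `φ'_{k'}`) the relation `x_n y_n = 0` gives
`x_n^k (x_n, y_n) ⊆ (x_n^{k+1})` when `k ≥ 1`, which absorbs the error terms; the only new
generators of `I^{n-1}_{i-1,j}`, the `x_I` with `|I| = i - 1`, become `x_n x_I ∈ I^n_{i,j}` after
multiplication by `x_n`, and `x_n^k a` is hit by `ρ a`. Equivariance holds because `ι` intertwines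
`σ ∈ S_{n-1}` with its extension to `S_n`, which fixes `x_n, y_n` and preserves `I^n_{i,j}`.
-/

section Generic

variable {R S : Type*} [CommSemiring R] [CommSemiring S]

theorem Multiset.esymm_zero_cons (s : Multiset R) (k : ℕ) :
    (0 ::ₘ s).esymm k = s.esymm k := by
  cases k with
  | zero => simp [Multiset.esymm, Multiset.powersetCard_zero_left]
  | succ k => simp [Multiset.esymm, Multiset.powersetCard_cons]

theorem aeval_comp_perm_esymm [Algebra R S] {ι : Type*} [Fintype ι] (v : ι → S)
    (σ : Equiv.Perm ι) (k : ℕ) :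
    aeval (v ∘ σ) (esymm ι R k) = aeval v (esymm ι R k) := by
  rw [← aeval_rename, esymm_isSymmetric]

theorem aeval_lastCases_zero_esymm [Algebra R S] {m : ℕ} (v : Fin m → S) (k : ℕ) :
    aeval (Fin.lastCases 0 v : Fin (m + 1) → S) (esymm (Fin (m + 1)) R k) =
      aeval v (esymm (Fin m) R k) := by
  have huniv : Finset.univ.val.map (Fin.lastCases 0 v : Fin (m + 1) → S) =
      0 ::ₘ Finset.univ.val.map v := by
    rw [Fin.univ_val_map, List.ofFn_succ', Fin.univ_val_map, List.concat_eq_append,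
      Multiset.coe_eq_coe.2 (List.perm_append_singleton _ _), ← Multiset.cons_coe]
    simp
  rw [aeval_esymm_eq_multiset_esymm, aeval_esymm_eq_multiset_esymm, huniv,
    Multiset.esymm_zero_cons]

theorem Ideal.mul_map_mem_of_mem_span {F : Type*} [FunLike F R S] [RingHomClass F R S] (f : F)
    {s : Set R} {L : Ideal S} {c : S} (h : ∀ g ∈ s, c * f g ∈ L) {P : R} (hP : P ∈ Ideal.span s) :
    c * f P ∈ L := by
  have hspan : Ideal.span s ≤ (L.colon {c}).comap f := Ideal.span_le.2 fun g hg => by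
    simpa [Submodule.mem_colon_singleton, mul_comm] using h g hg
  simpa [Submodule.mem_colon_singleton, mul_comm] using hspan hP

theorem Ideal.sup_span_le_comap (g : R →+* R) {J : Ideal R} {T : Set R} (hJ : J ≤ J.comap g)
    (hT : ∀ t ∈ T, g t = t) : J ⊔ Ideal.span T ≤ (J ⊔ Ideal.span T).comap g :=
  sup_le (hJ.trans (Ideal.comap_mono le_sup_left)) <| Ideal.span_le.2 fun t ht => by
    simpa [hT t ht] using Ideal.mem_sup_right (Ideal.subset_span ht)

theorem pow_mul_mem_span_pow_succ {A : Type*} [CommRing A] {a b v : A} (hab : a * b = 0) {k : ℕ}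
    (hk : 1 ≤ k) (hv : v ∈ Ideal.span {a, b}) : a ^ k * v ∈ Ideal.span {a ^ (k + 1)} := by
  obtain ⟨r, s, rfl⟩ := Ideal.mem_span_pair.1 hv
  obtain ⟨k, rfl⟩ := Nat.exists_eq_add_of_le' hk
  exact Ideal.mem_span_singleton'.2 ⟨r, by linear_combination (-(s * a ^ k)) * hab⟩

end Generic

section Basic

variable {n : ℕ}

theorem B.algHom_ext {A : Type*} [Semiring A] [Algebra ℂ A] {f g : B n →ₐ[ℂ] A}
    (hx : ∀ t, f (xv n t) = g (xv n t)) (hy : ∀ t, f (yv n t) = g (yv n t)) : f = g :=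
  Ideal.Quotient.algHom_ext ℂ <| MvPolynomial.algHom_ext fun
    | .inl t => hx t
    | .inr t => hy t

theorem xv_mul_yv (t : Fin n) : xv n t * yv n t = 0 := by
  rw [xv, yv, ← map_mul, Ideal.Quotient.mkₐ_eq_mk, Ideal.Quotient.eq_zero_iff_mem]
  exact Ideal.subset_span ⟨t, rfl⟩

section Lift

variable {A : Type*} [CommSemiring A] [Algebra ℂ A] (a b : Fin n → A) (hab : ∀ t, a t * b t = 0)

def liftB : B n →ₐ[ℂ] A :=
  Ideal.Quotient.liftₐ (Bideal n) (aeval (Sum.elim a b)) fun _ hp => RingHom.mem_ker.1 <|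
    (Ideal.span_le (I := RingHom.ker (aeval (Sum.elim a b)))).2
      (by rintro _ ⟨t, rfl⟩; simp [hab]) hp

@[simp] theorem liftB_xv (t : Fin n) : liftB a b hab (xv n t) = a t :=
  aeval_X _ _

@[simp] theorem liftB_yv (t : Fin n) : liftB a b hab (yv n t) = b t :=
  aeval_X _ _

end Lift

@[simp] theorem permB_xv (σ : Equiv.Perm (Fin n)) (t : Fin n) :
    permB n σ (xv n t) = xv n (σ t) :=
  congrArg (mkB n) (rename_X _ _)

@[simp] theorem permB_yv (σ : Equiv.Perm (Fin n)) (t : Fin n) :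
    permB n σ (yv n t) = yv n (σ t) :=
  congrArg (mkB n) (rename_X _ _)

variable {m : ℕ}

@[simp] theorem inclB_xv (h : m ≤ n) (t : Fin m) :
    inclB m n h (xv m t) = xv n (Fin.castLE h t) :=
  congrArg (mkB n) (rename_X _ _)

@[simp] theorem inclB_yv (h : m ≤ n) (t : Fin m) :
    inclB m n h (yv m t) = yv n (Fin.castLE h t) :=
  congrArg (mkB n) (rename_X _ _)

theorem extPerm_castLE (h : m ≤ n) (σ : Equiv.Perm (Fin m)) (t : Fin m) :
    extPerm m n h σ (Fin.castLE h t) = Fin.castLE h (σ t) :=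
  σ.viaFintypeEmbedding_apply_image _ t

theorem inclB_permB (h : m ≤ n) (σ : Equiv.Perm (Fin m)) (P : B m) :
    inclB m n h (permB m σ P) = permB n (extPerm m n h σ) (inclB m n h P) := by
  have key : (inclB m n h).comp (permB m σ) = (permB n (extPerm m n h σ)).comp (inclB m n h) :=
    B.algHom_ext (fun t => by simp [extPerm_castLE]) (fun t => by simp [extPerm_castLE])
  exact congr($key P)

end Basic

section SymmetricFunctions

variable {n : ℕ}

theorem eX_eq_aeval_esymm (k : ℕ) : eX n k = aeval (xv n) (esymm (Fin n) ℂ k) := by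
  simp [eX, esymm]

theorem fY_eq_aeval_esymm (k : ℕ) : fY n k = aeval (yv n) (esymm (Fin n) ℂ k) := by
  simp [fY, esymm]

theorem permB_eX (σ : Equiv.Perm (Fin n)) (k : ℕ) : permB n σ (eX n k) = eX n k := by
  rw [eX_eq_aeval_esymm, comp_aeval_apply]
  simp_rw [permB_xv]
  exact aeval_comp_perm_esymm (xv n) σ k

theorem permB_fY (σ : Equiv.Perm (Fin n)) (k : ℕ) : permB n σ (fY n k) = fY n k := by
  rw [fY_eq_aeval_esymm, comp_aeval_apply]
  simp_rw [permB_yv]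
  exact aeval_comp_perm_esymm (yv n) σ k

end SymmetricFunctions

section Generators

variable {n : ℕ} {i j : ℕ}

theorem eX_mem_Iij {l : ℕ} (hl : 1 ≤ l) (hli : l < i) : eX n l ∈ Iij n i j :=
  Ideal.subset_span (Or.inl (Or.inl (Or.inl ⟨l, hl, hli, rfl⟩)))

theorem prod_xv_mem_Iij {I : Finset (Fin n)} (hI : I.card = i) : ∏ t ∈ I, xv n t ∈ Iij n i j :=
  Ideal.subset_span (Or.inl (Or.inl (Or.inr ⟨I, hI, rfl⟩)))

theorem fY_mem_Iij {l : ℕ} (hl : 1 ≤ l) (hlj : l < j) : fY n l ∈ Iij n i j :=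
  Ideal.subset_span (Or.inl (Or.inr ⟨l, hl, hlj, rfl⟩))

theorem prod_yv_mem_Iij {J : Finset (Fin n)} (hJ : J.card = j) : ∏ t ∈ J, yv n t ∈ Iij n i j :=
  Ideal.subset_span (Or.inr ⟨J, hJ, rfl⟩)

theorem Sij_pred_left_subset : Sij n (i - 1) j ⊆
    Sij n i j ∪ {p | ∃ I : Finset (Fin n), I.card = i - 1 ∧ p = ∏ t ∈ I, xv n t} := by
  rintro p (((⟨l, hl, hli, rfl⟩ | hx) | hf) | hy)
  · exact Or.inl (Or.inl (Or.inl (Or.inl ⟨l, hl, by omega, rfl⟩)))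
  · exact Or.inr hx
  · exact Or.inl (Or.inl (Or.inr hf))
  · exact Or.inl (Or.inr hy)

theorem Sij_pred_right_subset : Sij n i (j - 1) ⊆
    Sij n i j ∪ {p | ∃ J : Finset (Fin n), J.card = j - 1 ∧ p = ∏ t ∈ J, yv n t} := by
  rintro p (((he | hx) | ⟨l, hl, hlj, rfl⟩) | hy)
  · exact Or.inl (Or.inl (Or.inl (Or.inl he)))
  · exact Or.inl (Or.inl (Or.inl (Or.inr hx)))
  · exact Or.inl (Or.inl (Or.inr ⟨l, hl, by omega, rfl⟩))
  · exact Or.inr hy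

theorem Iij_le_comap_permB (σ : Equiv.Perm (Fin n)) :
    Iij n i j ≤ (Iij n i j).comap (permB n σ) := by
  refine Ideal.span_le.2 ?_
  rintro _ (((⟨l, hl, hli, rfl⟩ | ⟨I, hI, rfl⟩) | ⟨l, hl, hlj, rfl⟩) | ⟨J, hJ, rfl⟩) <;>
    simp only [SetLike.mem_coe, Ideal.mem_comap, map_prod, permB_xv, permB_yv, permB_eX, permB_fY]
  · exact eX_mem_Iij hl hli
  · simpa using prod_xv_mem_Iij (j := j) (I := I.map σ.toEmbedding) (by rwa [Finset.card_map])
  · exact fY_mem_Iij hl hlj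
  · simpa using prod_yv_mem_Iij (i := i) (J := J.map σ.toEmbedding) (by rwa [Finset.card_map])

theorem inclB_prod_xv {m : ℕ} (h : m ≤ n) (I : Finset (Fin m)) :
    inclB m n h (∏ t ∈ I, xv m t) = ∏ t ∈ I.map (Fin.castLEEmb h), xv n t := by
  simp [Finset.prod_map]

theorem inclB_prod_yv {m : ℕ} (h : m ≤ n) (J : Finset (Fin m)) :
    inclB m n h (∏ t ∈ J, yv m t) = ∏ t ∈ J.map (Fin.castLEEmb h), yv n t := by
  simp [Finset.prod_map]

end Generators

section Subquotient

variable {m n : ℕ} (f : B m →ₐ[ℂ] B n) (I : Ideal (B m)) {K K' : Ideal (B n)} {c : B n}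

theorem sqMk_eq_sqMk_iff {p q : B n} (hp : p ∈ K) (hq : q ∈ K) :
    sqMk n K K' p hp = sqMk n K K' q hq ↔ p - q ∈ K' := by
  rw [sqMk, sqMk, Submodule.Quotient.eq]
  simp [Submodule.mem_comap]

/-- The map `P ↦ c * f P` from `B m ⧸ I` to the subquotient `K / K'`. -/
def mulSQ (hc : c ∈ K) (hI : ∀ P ∈ I, c * f P ∈ K') : (B m ⧸ I) →ₗ[ℂ] SQ n K K' :=
  (I.restrictScalars ℂ).liftQ
      (Submodule.mkQ _ ∘ₗ (LinearMap.mulLeft ℂ c ∘ₗ f.toLinearMap).codRestrict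
        (K.restrictScalars ℂ) fun _ => K.mul_mem_right _ hc)
      (fun P hP => (Submodule.Quotient.mk_eq_zero _).2 (hI P hP)) ∘ₗ
    (Submodule.Quotient.restrictScalarsEquiv ℂ I).symm.toLinearMap

variable {f I}

theorem mulSQ_mk (hc : c ∈ K) (hI : ∀ P ∈ I, c * f P ∈ K') (P : B m) :
    mulSQ f I hc hI (Ideal.Quotient.mk I P) = sqMk n K K' (c * f P) (K.mul_mem_right _ hc) :=
  rfl

theorem mulSQ_surjective (hc : c ∈ K) (hI : ∀ P ∈ I, c * f P ∈ K')
    (h : ∀ p ∈ K, ∃ P, p - c * f P ∈ K') : Function.Surjective (mulSQ f I hc hI) := by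
  intro q
  obtain ⟨⟨p, hp⟩, rfl⟩ := Submodule.Quotient.mk_surjective _ q
  obtain ⟨P, hP⟩ := h p hp
  refine ⟨Ideal.Quotient.mk I P, ?_⟩
  rw [mulSQ_mk]
  exact (sqMk_eq_sqMk_iff _ hp).2 (by simpa using neg_mem hP)

theorem mulSQ_mk_map (hc : c ∈ K) (hI : ∀ P ∈ I, c * f P ∈ K') {g : B m →ₐ[ℂ] B m}
    {g' : B n →ₐ[ℂ] B n} (hfg : ∀ P, f (g P) = g' (f P)) (hgc : g' c = c) (hK' : K' ≤ K'.comap g')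
    {P : B m} {p : B n} (hp : p ∈ K) (hq : g' p ∈ K)
    (h : mulSQ f I hc hI (Ideal.Quotient.mk I P) = sqMk n K K' p hp) :
    mulSQ f I hc hI (Ideal.Quotient.mk I (g P)) = sqMk n K K' (g' p) hq := by
  rw [mulSQ_mk, sqMk_eq_sqMk_iff] at h ⊢
  simpa [hfg, hgc] using hK' h

end Subquotient

section LastVariable

variable {m i j : ℕ}

local notation "ι" => inclB m (m + 1) (Nat.le_succ m)

theorem castLE_succ_eq_castSucc (t : Fin m) : Fin.castLE (Nat.le_succ m) t = t.castSucc :=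
  rfl

theorem extPerm_last (σ : Equiv.Perm (Fin m)) :
    extPerm m (m + 1) (Nat.le_succ m) σ (Fin.last m) = Fin.last m :=
  σ.viaFintypeEmbedding_apply_notMem_range _ fun ⟨t, ht⟩ => Fin.castSucc_ne_last t ht

theorem last_notMem_map_castLEEmb (I : Finset (Fin m)) :
    Fin.last m ∉ I.map (Fin.castLEEmb (Nat.le_succ m)) := by
  simp [castLE_succ_eq_castSucc, Fin.castSucc_ne_last]

variable (m) in
def evalLastZero : B (m + 1) →ₐ[ℂ] B m :=
  liftB (Fin.lastCases 0 (xv m)) (Fin.lastCases 0 (yv m)) fun t => by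
    induction t using Fin.lastCases <;> simp [xv_mul_yv]

variable (m) in
def lastVarIdeal : Ideal (B (m + 1)) :=
  Ideal.span {xv (m + 1) (Fin.last m), yv (m + 1) (Fin.last m)}

theorem xv_last_mem_lastVarIdeal : xv (m + 1) (Fin.last m) ∈ lastVarIdeal m :=
  Ideal.subset_span (by simp)

theorem yv_last_mem_lastVarIdeal : yv (m + 1) (Fin.last m) ∈ lastVarIdeal m :=
  Ideal.subset_span (by simp)

theorem sub_inclB_evalLastZero_mem (Q : B (m + 1)) :
    Q - ι (evalLastZero m Q) ∈ lastVarIdeal m := by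
  have key : (Ideal.Quotient.mkₐ ℂ (lastVarIdeal m)).comp ((ι).comp (evalLastZero m)) =
      Ideal.Quotient.mkₐ ℂ (lastVarIdeal m) := by
    refine B.algHom_ext (fun t => ?_) (fun t => ?_) <;> induction t using Fin.lastCases <;>
      simp [evalLastZero, castLE_succ_eq_castSucc,
        Ideal.Quotient.eq_zero_iff_mem.2 (xv_last_mem_lastVarIdeal (m := m)),
        Ideal.Quotient.eq_zero_iff_mem.2 (yv_last_mem_lastVarIdeal (m := m))]
  rw [← Ideal.Quotient.eq_zero_iff_mem, map_sub, sub_eq_zero]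
  exact congr($key Q).symm

theorem inclB_evalLastZero_mem_sup {J : Ideal (B (m + 1))} {q : B (m + 1)} (hq : q ∈ J) :
    ι (evalLastZero m q) ∈ J ⊔ lastVarIdeal m := by
  rw [← sub_sub_cancel q (ι (evalLastZero m q))]
  exact sub_mem (Ideal.mem_sup_left hq) (Ideal.mem_sup_right (sub_inclB_evalLastZero_mem q))

theorem evalLastZero_eX (k : ℕ) : evalLastZero m (eX (m + 1) k) = eX m k := by
  simp_rw [eX_eq_aeval_esymm, comp_aeval_apply, evalLastZero, liftB_xv]
  exact aeval_lastCases_zero_esymm (xv m) k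

theorem evalLastZero_fY (k : ℕ) : evalLastZero m (fY (m + 1) k) = fY m k := by
  simp_rw [fY_eq_aeval_esymm, comp_aeval_apply, evalLastZero, liftB_yv]
  exact aeval_lastCases_zero_esymm (yv m) k

theorem inclB_mem_of_mem_Sij {g : B m} (hg : g ∈ Sij m i j) :
    ι g ∈ Iij (m + 1) i j ⊔ lastVarIdeal m := by
  rcases hg with (((⟨l, hl, hli, rfl⟩ | ⟨I, hI, rfl⟩) | ⟨l, hl, hlj, rfl⟩) | ⟨J, hJ, rfl⟩)
  · rw [← evalLastZero_eX]
    exact inclB_evalLastZero_mem_sup (eX_mem_Iij hl hli)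
  · rw [inclB_prod_xv]
    exact Ideal.mem_sup_left (prod_xv_mem_Iij (by rwa [Finset.card_map]))
  · rw [← evalLastZero_fY]
    exact inclB_evalLastZero_mem_sup (fY_mem_Iij hl hlj)
  · rw [inclB_prod_yv]
    exact Ideal.mem_sup_left (prod_yv_mem_Iij (by rwa [Finset.card_map]))

theorem mul_inclB_mem_of_mem_Sij {c : B (m + 1)} {L : Ideal (B (m + 1))}
    (hI : Iij (m + 1) i j ≤ L) (hN : ∀ v ∈ lastVarIdeal m, c * v ∈ L) {g : B m}
    (hg : g ∈ Sij m i j) : c * ι g ∈ L := by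
  obtain ⟨u, hu, v, hv, huv⟩ := Submodule.mem_sup.1 (inclB_mem_of_mem_Sij hg)
  rw [← huv, mul_add]
  exact L.add_mem (L.mul_mem_left c (hI hu)) (hN v hv)

theorem xv_last_mul_inclB_prod_mem {I : Finset (Fin m)} (hI : I.card + 1 = i) :
    xv (m + 1) (Fin.last m) * ι (∏ t ∈ I, xv m t) ∈ Iij (m + 1) i j := by
  rw [inclB_prod_xv, ← Finset.prod_cons (last_notMem_map_castLEEmb I)]
  exact prod_xv_mem_Iij (by rwa [Finset.card_cons, Finset.card_map])

theorem yv_last_mul_inclB_prod_mem {J : Finset (Fin m)} (hJ : J.card + 1 = j) :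
    yv (m + 1) (Fin.last m) * ι (∏ t ∈ J, yv m t) ∈ Iij (m + 1) i j := by
  rw [inclB_prod_yv, ← Finset.prod_cons (last_notMem_map_castLEEmb J)]
  exact prod_yv_mem_Iij (by rwa [Finset.card_cons, Finset.card_map])

theorem xv_last_pow_mul_mem {k : ℕ} (hk : 1 ≤ k) {v : B (m + 1)} (hv : v ∈ lastVarIdeal m) :
    xv (m + 1) (Fin.last m) ^ k * v ∈ Ideal.span {xv (m + 1) (Fin.last m) ^ (k + 1)} :=
  pow_mul_mem_span_pow_succ (xv_mul_yv _) hk hv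

theorem yv_last_pow_mul_mem {k : ℕ} (hk : 1 ≤ k) {v : B (m + 1)} (hv : v ∈ lastVarIdeal m) :
    yv (m + 1) (Fin.last m) ^ k * v ∈ Ideal.span {yv (m + 1) (Fin.last m) ^ (k + 1)} :=
  pow_mul_mem_span_pow_succ (by rw [mul_comm, xv_mul_yv]) hk (by rwa [Set.pair_comm])

end LastVariable

section RecursiveMaps

variable {m i j : ℕ}

local notation "ι" => inclB m (m + 1) (Nat.le_succ m)

theorem Iij_le_comap_L0Ideal : Iij m i j ≤ (L0Ideal m i j).comap ι :=
  Ideal.span_le.2 fun _ hg => inclB_mem_of_mem_Sij hg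

theorem xv_last_pow_mem_LkIdeal {k : ℕ} : xv (m + 1) (Fin.last m) ^ k ∈ LkIdeal m i j k :=
  Ideal.mem_sup_right (Ideal.subset_span (by simp))

theorem yv_last_pow_mem_MyIdeal {k : ℕ} : yv (m + 1) (Fin.last m) ^ k ∈ MyIdeal m i j k :=
  Ideal.mem_sup_right (Ideal.subset_span (by simp))

theorem xv_last_pow_mul_inclB_mem (hi : 1 ≤ i) {k : ℕ} (hk : 1 ≤ k) :
    ∀ P ∈ Iij m (i - 1) j, xv (m + 1) (Fin.last m) ^ k * ι P ∈ LkIdeal m i j (k + 1) := by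
  refine fun P => Ideal.mul_map_mem_of_mem_span ι fun g hg => ?_
  rcases Sij_pred_left_subset hg with hg | ⟨I, hI, rfl⟩
  · refine mul_inclB_mem_of_mem_Sij le_sup_left (fun v hv => Ideal.mem_sup_right ?_) hg
    exact Ideal.span_mono (by simp) (xv_last_pow_mul_mem hk hv)
  · obtain ⟨k, rfl⟩ := Nat.exists_eq_add_of_le' hk
    rw [pow_succ, mul_assoc]
    exact Ideal.mem_sup_left (Ideal.mul_mem_left _ _ (xv_last_mul_inclB_prod_mem (by omega)))

theorem yv_last_pow_mul_inclB_mem (hj : 1 ≤ j) {k : ℕ} (hk : 1 ≤ k) :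
    ∀ P ∈ Iij m i (j - 1), yv (m + 1) (Fin.last m) ^ k * ι P ∈ MyIdeal m i j (k + 1) := by
  refine fun P => Ideal.mul_map_mem_of_mem_span ι fun g hg => ?_
  rcases Sij_pred_right_subset hg with hg | ⟨J, hJ, rfl⟩
  · exact mul_inclB_mem_of_mem_Sij le_sup_left
      (fun v hv => Ideal.mem_sup_right (yv_last_pow_mul_mem hk hv)) hg
  · obtain ⟨k, rfl⟩ := Nat.exists_eq_add_of_le' hk
    rw [pow_succ, mul_assoc]
    exact Ideal.mem_sup_left (Ideal.mul_mem_left _ _ (yv_last_mul_inclB_prod_mem (by omega)))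

theorem exists_sub_xv_last_pow_mul_inclB_mem {k : ℕ} (hk : 1 ≤ k) {p : B (m + 1)}
    (hp : p ∈ LkIdeal m i j k) :
    ∃ P, p - xv (m + 1) (Fin.last m) ^ k * ι P ∈ LkIdeal m i j (k + 1) := by
  obtain ⟨u, hu, v, hv, rfl⟩ := Submodule.mem_sup.1 hp
  obtain ⟨a, b, rfl⟩ := Ideal.mem_span_pair.1 hv
  obtain ⟨r, hr⟩ := Ideal.mem_span_singleton'.1
    (xv_last_pow_mul_mem hk (sub_inclB_evalLastZero_mem a))
  refine ⟨evalLastZero m a, ?_⟩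
  convert (Ideal.add_mem _ (Ideal.mem_sup_left hu)
    (Ideal.mem_sup_right (Ideal.mem_span_pair.2 ⟨r, b, rfl⟩)) : _ ∈ LkIdeal m i j (k + 1))
    using 1
  linear_combination -hr

theorem exists_sub_yv_last_pow_mul_inclB_mem {k : ℕ} (hk : 1 ≤ k) {p : B (m + 1)}
    (hp : p ∈ MyIdeal m i j k) :
    ∃ P, p - yv (m + 1) (Fin.last m) ^ k * ι P ∈ MyIdeal m i j (k + 1) := by
  obtain ⟨u, hu, v, hv, rfl⟩ := Submodule.mem_sup.1 hp
  obtain ⟨a, rfl⟩ := Ideal.mem_span_singleton'.1 hv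
  obtain ⟨r, hr⟩ := Ideal.mem_span_singleton'.1
    (yv_last_pow_mul_mem hk (sub_inclB_evalLastZero_mem a))
  refine ⟨evalLastZero m a, ?_⟩
  convert (Ideal.add_mem _ (Ideal.mem_sup_left hu)
    (Ideal.mem_sup_right (Ideal.mem_span_singleton'.2 ⟨r, rfl⟩)) : _ ∈ MyIdeal m i j (k + 1))
    using 1
  linear_combination -hr

variable (σ : Equiv.Perm (Fin m))

local notation "σ'" => permB (m + 1) (extPerm m (m + 1) (Nat.le_succ m) σ)

theorem L0Ideal_le_comap_permB : L0Ideal m i j ≤ (L0Ideal m i j).comap σ' :=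
  Ideal.sup_span_le_comap _ (Iij_le_comap_permB _) (by simp [extPerm_last])

theorem LkIdeal_le_comap_permB (k : ℕ) : LkIdeal m i j k ≤ (LkIdeal m i j k).comap σ' :=
  Ideal.sup_span_le_comap _ (Iij_le_comap_permB _) (by simp [extPerm_last])

theorem MyIdeal_le_comap_permB (k : ℕ) : MyIdeal m i j k ≤ (MyIdeal m i j k).comap σ' :=
  Ideal.sup_span_le_comap _ (Iij_le_comap_permB _) (by simp [extPerm_last])

end RecursiveMaps


/-- (Here `n = m + 1`, so `i + j ≤ n` reads `i + j ≤ m + 1`.)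
For `i, j ≥ 1` with `i + j ≤ n`, `1 ≤ k ≤ i−1` and `1 ≤ k' ≤ j−1`, the three maps
`φ₀ : R^{n−1}_{i,j} → R^n_{i,j}/⟨xₙ, yₙ⟩`, `P ↦ P`,
`φ_k : R^{n−1}_{i−1,j} → ⟨xₙ^k, yₙ⟩/⟨xₙ^{k+1}, yₙ⟩`, `P ↦ xₙ^k P`, and
`φ'_{k'} : R^{n−1}_{i,j−1} → ⟨yₙ^{k'}⟩/⟨yₙ^{k'+1}⟩`, `P ↦ yₙ^{k'} P`,
are well-defined surjective homomorphisms of `ℂ[S_{n−1}]`-modules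
(equivariance is expressed on representatives, with `S_{n−1} ≤ Sₙ` permuting the
first `n−1` letters). -/
theorem recursive_surjections_general_case (m i j k k' : ℕ) (hi : 1 ≤ i) (hj : 1 ≤ j)
    (hk1 : 1 ≤ k) (hk'1 : 1 ≤ k') :
    (∃ φ : (B m ⧸ Iij m i j) →ₗ[ℂ] (B (m + 1) ⧸ L0Ideal m i j),
      (∀ P : B m, φ (Ideal.Quotient.mk (Iij m i j) P) =
        Ideal.Quotient.mk (L0Ideal m i j) (inclB m (m + 1) (Nat.le_succ m) P)) ∧
      Function.Surjective φ ∧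
      (∀ (σ : Equiv.Perm (Fin m)) (P : B m) (Q : B (m + 1)),
        φ (Ideal.Quotient.mk (Iij m i j) P) = Ideal.Quotient.mk (L0Ideal m i j) Q →
        φ (Ideal.Quotient.mk (Iij m i j) (permB m σ P)) =
          Ideal.Quotient.mk (L0Ideal m i j) (permB (m + 1) (extPerm m (m + 1) (Nat.le_succ m) σ) Q))) ∧
    (∃ φ : (B m ⧸ Iij m (i - 1) j) →ₗ[ℂ] SQ (m + 1) (LkIdeal m i j k) (LkIdeal m i j (k + 1)),
      (∀ P : B m, φ (Ideal.Quotient.mk (Iij m (i - 1) j) P) =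
        sqMk (m + 1) (LkIdeal m i j k) (LkIdeal m i j (k + 1))
          (xv (m + 1) (Fin.last m) ^ k * inclB m (m + 1) (Nat.le_succ m) P)
          (Ideal.mul_mem_right _ _ (Ideal.mem_sup_right (Ideal.subset_span (by simp))))) ∧
      Function.Surjective φ ∧
      (∀ (σ : Equiv.Perm (Fin m)) (P : B m) (p : B (m + 1)) (hp : p ∈ LkIdeal m i j k)
        (hq : permB (m + 1) (extPerm m (m + 1) (Nat.le_succ m) σ) p ∈ LkIdeal m i j k),
        φ (Ideal.Quotient.mk (Iij m (i - 1) j) P) =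
          sqMk (m + 1) (LkIdeal m i j k) (LkIdeal m i j (k + 1)) p hp →
        φ (Ideal.Quotient.mk (Iij m (i - 1) j) (permB m σ P)) =
          sqMk (m + 1) (LkIdeal m i j k) (LkIdeal m i j (k + 1))
            (permB (m + 1) (extPerm m (m + 1) (Nat.le_succ m) σ) p) hq)) ∧
    (∃ φ : (B m ⧸ Iij m i (j - 1)) →ₗ[ℂ] SQ (m + 1) (MyIdeal m i j k') (MyIdeal m i j (k' + 1)),
      (∀ P : B m, φ (Ideal.Quotient.mk (Iij m i (j - 1)) P) =
        sqMk (m + 1) (MyIdeal m i j k') (MyIdeal m i j (k' + 1))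
          (yv (m + 1) (Fin.last m) ^ k' * inclB m (m + 1) (Nat.le_succ m) P)
          (Ideal.mul_mem_right _ _ (Ideal.mem_sup_right (Ideal.subset_span rfl)))) ∧
      Function.Surjective φ ∧
      (∀ (σ : Equiv.Perm (Fin m)) (P : B m) (p : B (m + 1)) (hp : p ∈ MyIdeal m i j k')
        (hq : permB (m + 1) (extPerm m (m + 1) (Nat.le_succ m) σ) p ∈ MyIdeal m i j k'),
        φ (Ideal.Quotient.mk (Iij m i (j - 1)) P) =
          sqMk (m + 1) (MyIdeal m i j k') (MyIdeal m i j (k' + 1)) p hp →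
        φ (Ideal.Quotient.mk (Iij m i (j - 1)) (permB m σ P)) =
          sqMk (m + 1) (MyIdeal m i j k') (MyIdeal m i j (k' + 1))
            (permB (m + 1) (extPerm m (m + 1) (Nat.le_succ m) σ) p) hq)) := by
  have hx := xv_last_pow_mul_inclB_mem (m := m) (j := j) hi hk1
  have hy := yv_last_pow_mul_inclB_mem (m := m) (i := i) hj hk'1
  refine ⟨⟨(Ideal.quotientMapₐ _ _ Iij_le_comap_L0Ideal).toLinearMap, fun P => rfl, ?_, ?_⟩,
    ⟨mulSQ _ _ xv_last_pow_mem_LkIdeal hx, mulSQ_mk _ hx,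
      mulSQ_surjective _ hx fun p => exists_sub_xv_last_pow_mul_inclB_mem hk1,
      fun σ P p hp hq => mulSQ_mk_map _ hx (inclB_permB _ σ) (by simp [extPerm_last])
        (LkIdeal_le_comap_permB σ _) hp hq⟩,
    ⟨mulSQ _ _ yv_last_pow_mem_MyIdeal hy, mulSQ_mk _ hy,
      mulSQ_surjective _ hy fun p => exists_sub_yv_last_pow_mul_inclB_mem hk'1,
      fun σ P p hp hq => mulSQ_mk_map _ hy (inclB_permB _ σ) (by simp [extPerm_last])
        (MyIdeal_le_comap_permB σ _) hp hq⟩⟩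
  · intro q
    obtain ⟨Q, rfl⟩ := Ideal.Quotient.mk_surjective q
    exact ⟨Ideal.Quotient.mk _ (evalLastZero m Q), Ideal.Quotient.eq.2
      (neg_sub Q _ ▸ neg_mem (Ideal.mem_sup_right (sub_inclB_evalLastZero_mem Q)))⟩
  · intro σ P Q h
    refine Ideal.Quotient.eq.2 ?_
    simpa [inclB_permB] using L0Ideal_le_comap_permB σ (Ideal.Quotient.eq.1 h)

end
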